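/- Let δ > 0 and let (x,y,z) ∈ Δ² satisfy δ < min(x,y,z) < 1/3 − 2δ. Then max(|P₁(x,y,z)|, |P₂(x,y,z)|, |P₃(x,y,z)|) > (3/2)δ²; in particular ‖P(x,y,z)‖ is bounded away from 0 on the set {(x,y,z) ∈ Δ² : δ < min(x,y,z) < 1/3 − 2δ}. -/

import Mathlib

/-! If the smallest coordinate of a point of `Δ²` is below `1/3 - 2δ`, the other two average
more than `1/3 + δ`, so some two coordinates differ by more than `3δ`. The component of `P`
carrying that difference has the third coordinate, which exceeds `δ`, as its factor. -/

open Filter Set Topology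

noncomputable section

/-- The rock–paper–scissors vector field `P` on `ℝ³`, with components
`P₁(x,y,z) = x(z-y)/2`, `P₂(x,y,z) = y(x-z)/2`, `P₃(x,y,z) = z(y-x)/2`. -/
def Pfield : ℝ × ℝ × ℝ → ℝ × ℝ × ℝ :=
  fun p => (p.1 * (p.2.2 - p.2.1) / 2, p.2.1 * (p.1 - p.2.2) / 2, p.2.2 * (p.2.1 - p.1) / 2)

/-- The simplex `Δ² = {(x,y,z) : x,y,z ≥ 0, x+y+z = 1}`. -/
def simplex2 : Set (ℝ × ℝ × ℝ) :=
  {p | 0 ≤ p.1 ∧ 0 ≤ p.2.1 ∧ 0 ≤ p.2.2 ∧ p.1 + p.2.1 + p.2.2 = 1}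

lemma three_mul_lt_abs_sub_of_min_lt {δ x y z : ℝ} (hsum : x + y + z = 1)
    (hmin : min x (min y z) < 1/3 - 2*δ) :
    3*δ < |z - y| ∨ 3*δ < |x - z| ∨ 3*δ < |y - x| := by
  by_contra! h
  obtain ⟨hzy, hxz, hyx⟩ := h
  rw [abs_le] at hzy hxz hyx
  rcases min_lt_iff.mp hmin with hx | hyz
  · linarith
  rcases min_lt_iff.mp hyz with hy | hz <;> linarith

lemma mul_div_two_lt_abs_mul_div_two {a b c d : ℝ} (ha : 0 ≤ a) (hb : 0 ≤ b)
    (hac : a < c) (hbd : b < |d|) : a * b / 2 < |c * d / 2| := by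
  rw [abs_div, abs_mul, abs_two, abs_of_pos (ha.trans_lt hac)]
  gcongr

lemma rps_components_max_gt {δ : ℝ} (hδ : 0 ≤ δ) {x y z : ℝ} (hsum : x + y + z = 1)
    (hlo : δ < min x (min y z)) (hhi : min x (min y z) < 1/3 - 2*δ) :
    (3/2) * δ^2 < max |x * (z - y) / 2| (max |y * (x - z) / 2| |z * (y - x) / 2|) := by
  have hx : δ < x := hlo.trans_le (min_le_left _ _)
  have hy : δ < y := hlo.trans_le ((min_le_right _ _).trans (min_le_left _ _))
  have hz : δ < z := hlo.trans_le ((min_le_right _ _).trans (min_le_right _ _))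
  have key : ∀ {c d : ℝ}, δ < c → 3*δ < |d| → (3/2) * δ^2 < |c * d / 2| := fun hc hd =>
    (by ring : (3/2) * δ^2 = δ * (3*δ) / 2) ▸
      mul_div_two_lt_abs_mul_div_two hδ (by positivity) hc hd
  rcases three_mul_lt_abs_sub_of_min_lt hsum hhi with h | h | h
  · exact lt_max_of_lt_left (key hx h)
  · exact lt_max_of_lt_right (lt_max_of_lt_left (key hy h))
  · exact lt_max_of_lt_right (lt_max_of_lt_right (key hz h))

lemma norm_Pfield (p : ℝ × ℝ × ℝ) : ‖Pfield p‖ =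
    max |p.1 * (p.2.2 - p.2.1) / 2| (max |p.2.1 * (p.1 - p.2.2) / 2| |p.2.2 * (p.2.1 - p.1) / 2|) := by
  simp only [Pfield, Prod.norm_def, Real.norm_eq_abs]

/-- On the part of the simplex where `δ < min(x,y,z) < 1/3 - 2δ`, the largest component of
`P` exceeds `(3/2)δ²`; in particular `‖P‖` is bounded away from `0` there. -/
theorem rps_field_bounded_below (δ : ℝ) (hδ : 0 < δ) :
    (∀ x y z : ℝ, 0 ≤ x → 0 ≤ y → 0 ≤ z → x + y + z = 1 →
      δ < min x (min y z) → min x (min y z) < 1/3 - 2*δ →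
      (3/2) * δ^2 < max |x * (z - y) / 2| (max |y * (x - z) / 2| |z * (y - x) / 2|)) ∧
    (∃ ε : ℝ, 0 < ε ∧ ∀ p : ℝ × ℝ × ℝ, p ∈ simplex2 →
      δ < min p.1 (min p.2.1 p.2.2) → min p.1 (min p.2.1 p.2.2) < 1/3 - 2*δ →
      ε ≤ ‖Pfield p‖) := by
  refine ⟨fun x y z _ _ _ hsum hlo hhi => rps_components_max_gt hδ.le hsum hlo hhi,
    (3/2) * δ^2, by positivity, ?_⟩
  rintro p ⟨-, -, -, hsum⟩ hlo hhi
  rw [norm_Pfield]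
  exact (rps_components_max_gt hδ.le hsum hlo hhi).le
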